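/- arXiv:1707.06269 — 9 statements merged into one kernel-verified Lean document; each statement's English description precedes it below -/
import Mathlib

section
/- If X is a normal topological space and κ an infinite cardinal, then every κ-continuous real-valued function f : X → ℝ is strictly κ-continuous; hence for normal spaces the notions of κ-continuity and strict κ-continuity of real-valued functions coincide. -/
/-!
If `f` is continuous on `insert x A` for every `x`, then `f` tends to `f x` along `A` at each
point `x` of `closure A`, so `f` agrees there with its extension by continuity from `A`, which is
continuous on `closure A`. For `#A ≤ κ` with `κ` infinite, `insert x A` is again small, so a
`κ`-continuous `f` is continuous on the closed set `closure A`, and Tietze's theorem extends it.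
-/

open Cardinal Set Filter Topology

universe u v

theorem ContinuousOn.closure_of_forall_continuousOn_insert {X : Type u} {Y : Type v}
    [TopologicalSpace X] [TopologicalSpace Y] [RegularSpace Y] [T2Space Y]
    {f : X → Y} {A : Set X} (hf : ∀ x ∈ closure A, ContinuousOn f (insert x A)) :
    ContinuousOn f (closure A) := by
  have hlim : ∀ x ∈ closure A, Tendsto f (𝓝[A] x) (𝓝 (f x)) := fun x hx =>
    continuousWithinAt_insert_self.mp (hf x hx x (mem_insert x A))
  exact (continuousOn_extendFrom subset_rfl fun x hx => ⟨f x, hlim x hx⟩).congr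
    fun x hx => (extendFrom_eq hx (hlim x hx)).symm

theorem ContinuousOn.exists_continuous_eqOn_of_isClosed {X : Type u} {Y : Type v}
    [TopologicalSpace X] [NormalSpace X] [TopologicalSpace Y] [TietzeExtension.{u, v} Y]
    {f : X → Y} {s : Set X} (hs : IsClosed s) (hf : ContinuousOn f s) :
    ∃ g : X → Y, Continuous g ∧ EqOn g f s := by
  obtain ⟨g, hg⟩ := ContinuousMap.exists_restrict_eq hs ⟨s.domRestrict f, hf.domRestrict⟩
  exact ⟨g, g.continuous, fun x hx => congr($hg ⟨x, hx⟩)⟩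

theorem Cardinal.mk_insert_le_of_aleph0_le {α : Type u} {s : Set α} {κ : Cardinal}
    (hκ : ℵ₀ ≤ κ) (hs : #s ≤ κ) (a : α) : #(insert a s : Set α) ≤ κ :=
  calc #(insert a s : Set α) ≤ #s + 1 := mk_insert_le
    _ ≤ κ + κ := add_le_add hs (one_le_aleph0.trans hκ)
    _ = κ := add_eq_self hκ

/-- On a normal space, every κ-continuous real-valued function is strictly κ-continuous. -/
theorem kappaContinuous_iff_strictKappaContinuous_of_normal
    {X : Type*} [TopologicalSpace X] [T4Space X]
    (κ : Cardinal) (hκ : Cardinal.aleph0 ≤ κ) (f : X → ℝ)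
    (hkappa : ∀ A : Set X, #A ≤ κ → Continuous (A.restrict f)) :
    ∀ A : Set X, #A ≤ κ → ∃ g : X → ℝ, Continuous g ∧ ∀ x ∈ A, g x = f x := by
  intro A hA
  have hclosure : ContinuousOn f (closure A) :=
    ContinuousOn.closure_of_forall_continuousOn_insert fun x _ =>
      continuousOn_iff_continuous_domRestrict.mpr
        (hkappa _ (mk_insert_le_of_aleph0_le hκ hA x))
  obtain ⟨g, hg, hgf⟩ := hclosure.exists_continuous_eqOn_of_isClosed isClosed_closure
  exact ⟨g, hg, fun x hx => hgf (subset_closure hx)⟩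
end

section
/- For every topological space X, the functional tightness satisfies t₀(X) ≤ d(X): if D is a dense subset of X with |D| ≤ κ (κ infinite), then every κ-continuous real-valued function on X is continuous. -/
open Cardinal Set

/-- From continuity of a restriction at a point, extract an open neighborhood
on which values of `f` at points of `A` are close to `f a`. -/
lemma restrict_cont_aux {X : Type*} [TopologicalSpace X] (f : X → ℝ)
    (A : Set X) (hA : Continuous (A.restrict f)) (a : X) (ha : a ∈ A)
    (ε : ℝ) (hε : 0 < ε) :
    ∃ U : Set X, IsOpen U ∧ a ∈ U ∧ ∀ z ∈ A ∩ U, dist (f z) (f a) < ε := by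
  have h := (hA.continuousAt (x := ⟨a, ha⟩))
  have h2 := (Metric.tendsto_nhds.mp h) ε hε
  rw [nhds_subtype_eq_comap, Filter.eventually_comap] at h2
  obtain ⟨t, ht, hts⟩ := h2.exists_mem
  obtain ⟨U, hUt, hUopen, haU⟩ := mem_nhds_iff.mp ht
  refine ⟨U, hUopen, haU, fun z hz => ?_⟩
  exact hts z (hUt hz.2) ⟨z, hz.1⟩ rfl

/-- Functional tightness is at most the density character. -/
theorem functionalTightness_le_density
    {X : Type*} [TopologicalSpace X]
    (κ : Cardinal) (hκ : Cardinal.aleph0 ≤ κ)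
    (D : Set X) (hD : Dense D) (hDcard : #D ≤ κ)
    (f : X → ℝ)
    (hkappa : ∀ A : Set X, #A ≤ κ → Continuous (A.restrict f)) :
    Continuous f := by
  have hcard : ∀ a : X, #(insert a D : Set X) ≤ κ := by
    intro a
    calc #(insert a D : Set X) ≤ #D + 1 := Cardinal.mk_insert_le
      _ ≤ κ + 1 := by gcongr
      _ = κ := by
        rw [Cardinal.add_one_eq hκ]
  rw [continuous_iff_continuousAt]
  intro x
  apply Metric.tendsto_nhds.mpr
  intro ε hε
  obtain ⟨U, hUopen, hxU, hU⟩ := restrict_cont_aux f (insert x D)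
    (hkappa _ (hcard x)) x (mem_insert x D) (ε/3) (by linarith)
  filter_upwards [hUopen.mem_nhds hxU] with y hy
  obtain ⟨V, hVopen, hyV, hV⟩ := restrict_cont_aux f (insert y D)
    (hkappa _ (hcard y)) y (mem_insert y D) (ε/3) (by linarith)
  obtain ⟨d, hdD, hdUV⟩ := hD.exists_mem_open (hUopen.inter hVopen) ⟨y, hy, hyV⟩
  have h1 : dist (f d) (f x) < ε/3 := hU d ⟨Or.inr hdD, hdUV.1⟩
  have h2 : dist (f d) (f y) < ε/3 := hV d ⟨Or.inr hdD, hdUV.2⟩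
  calc dist (f y) (f x) ≤ dist (f y) (f d) + dist (f d) (f x) := dist_triangle _ _ _
    _ < ε := by rw [dist_comm (f y) (f d)]; linarith
end

section
/- Functional tightness is not raised by quotient maps: if q : X → Y is a continuous surjective quotient map and every κ-continuous real-valued function on X is continuous (κ infinite), then every κ-continuous real-valued function on Y is continuous. -/
open Cardinal Set

/-- Functional tightness is not raised by quotient maps. -/
theorem functionalTightness_quotientMap
    {X Y : Type u} [TopologicalSpace X] [TopologicalSpace Y]
    (κ : Cardinal.{u}) (hκ : Cardinal.aleph0 ≤ κ)
    (q : X → Y) (hq : Topology.IsQuotientMap q)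
    (hX : ∀ f : X → ℝ, (∀ A : Set X, #A ≤ κ → Continuous (A.restrict f)) → Continuous f) :
    ∀ g : Y → ℝ, (∀ B : Set Y, #B ≤ κ → Continuous (B.restrict g)) → Continuous g := by
  intro g hg
  rw [hq.continuous_iff]
  apply hX
  intro A hA
  have hB : #(q '' A) ≤ κ := (mk_image_le).trans hA
  have hgB : Continuous ((q '' A).restrict g) := hg _ hB
  have : A.restrict (g ∘ q) =
      (q '' A).restrict g ∘ (fun a : A => ⟨q a, mem_image_of_mem q a.2⟩) := rfl
  rw [this]
  exact hgB.comp (Continuous.subtype_mk (hq.continuous.comp continuous_subtype_val) _)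
end

section
/- (Noble) Let Z be a regular topological space, {X_α : α ∈ A} a family of topological spaces, and f : ∏_{α∈A} X_α → Z a function that is σ-continuous and 2-continuous. Then f is continuous. -/
open Cardinal Set Topology Filter

/-- (Noble) A σ-continuous and 2-continuous function into a regular space is continuous. -/
theorem noble_continuity
    {A : Type*} {X : A → Type*} [∀ α, TopologicalSpace (X α)]
    {Z : Type*} [TopologicalSpace Z] [RegularSpace Z]
    (f : (∀ α, X α) → Z)
    (hσ : ∀ a : ∀ α, X α,
      Continuous (({x : ∀ α, X α | {α | x α ≠ a α}.Finite}).restrict f))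
    (h2 : ∀ Y : ∀ α, Set (X α), (∀ α, (Y α).Nonempty ∧ #(Y α) ≤ 2) →
      Continuous ((Set.pi Set.univ Y).restrict f)) :
    Continuous f := by
  classical
  rw [continuous_iff_continuousAt]
  intro x
  rw [ContinuousAt, (closed_nhds_basis (f x)).tendsto_right_iff]
  rintro C ⟨hC, hCc⟩
  set σs : Set (∀ α, X α) := {z : ∀ α, X α | {α | z α ≠ x α}.Finite} with hσsdef
  have hxσ : x ∈ σs := by simp [hσsdef]
  have hW : interior C ∈ 𝓝 (f x) := interior_mem_nhds.2 hC
  have h1 : σs.restrict f ⁻¹' (interior C) ∈ 𝓝 (⟨x, hxσ⟩ : σs) :=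
    ((hσ x).continuousAt (x := ⟨x, hxσ⟩)) hW
  rw [nhds_subtype, Filter.mem_comap] at h1
  obtain ⟨U, hU, hUsub⟩ := h1
  rw [nhds_pi, Filter.mem_pi] at hU
  obtain ⟨I, hIfin, t, ht, htU⟩ := hU
  have key : ∀ z (hz : z ∈ σs), z ∈ I.pi t → f z ∈ interior C := by
    intro z hz hzt
    exact hUsub (show ((⟨z, hz⟩ : σs) : ∀ α, X α) ∈ U from htU hzt)
  have hpiI : I.pi t ∈ 𝓝 x := set_pi_mem_nhds hIfin fun α _ => ht α
  filter_upwards [hpiI] with y hy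
  -- 2-point sets
  set Y : ∀ α, Set (X α) := fun α => {x α, y α} with hYdef
  have hYprop : ∀ α, (Y α).Nonempty ∧ #(Y α) ≤ 2 := by
    intro α
    refine ⟨⟨x α, Or.inl rfl⟩, ?_⟩
    calc #(Y α) ≤ #({y α} : Set (X α)) + 1 := Cardinal.mk_insert_le
    _ = 2 := by rw [Cardinal.mk_singleton]; exact one_add_one_eq_two
  have hg := h2 Y hYprop
  have hyY : y ∈ Set.pi Set.univ Y := fun α _ => Or.inr rfl
  set D : Set (Set.pi Set.univ Y) := {z | (z : ∀ α, X α) ∈ σs} with hDdef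
  have hyD : (⟨y, hyY⟩ : Set.pi Set.univ Y) ∈ closure D := by
    rw [mem_closure_iff_nhds]
    intro N hN
    rw [nhds_subtype, Filter.mem_comap] at hN
    obtain ⟨V, hV, hVN⟩ := hN
    rw [nhds_pi, Filter.mem_pi] at hV
    obtain ⟨I', hI'fin, t', ht', ht'V⟩ := hV
    set z : ∀ α, X α := fun α => if α ∈ I' then y α else x α with hzdef
    have hzY : z ∈ Set.pi Set.univ Y := by
      intro α _
      by_cases hα : α ∈ I' <;> simp [hzdef, hα, hYdef]
    refine ⟨⟨z, hzY⟩, ?_, ?_⟩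
    · apply hVN
      show z ∈ V
      apply ht'V
      intro α hα
      simpa [hzdef, hα] using mem_of_mem_nhds (ht' α)
    · show z ∈ σs
      apply hI'fin.subset
      intro α hα
      by_contra hne
      exact hα (by simp [hzdef, hne])
  have himg : ((Set.pi Set.univ Y).restrict f) '' D ⊆ interior C := by
    rintro _ ⟨z, hz, rfl⟩
    refine key _ hz ?_
    intro α hα
    rcases z.2 α (mem_univ α) with h | h
    · rw [h]; exact mem_of_mem_nhds (ht α)
    · rw [h]; exact hy α hα
  have : f y ∈ closure (interior C) := by
    have h3 : (((Set.pi Set.univ Y).restrict f)) '' closure D ⊆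
        closure ((((Set.pi Set.univ Y).restrict f)) '' D) :=
      image_closure_subset_closure_image hg
    have h4 := h3 ⟨_, hyD, rfl⟩
    exact closure_mono himg h4
  exact closure_minimal interior_subset hCc this
end

section
/- Let κ be an infinite cardinal and {X_α : α < 2^κ} a family of topological spaces. Every κ-continuous function f : ∏_{α<2^κ} X_α → ℝ is 2-continuous, i.e., its restriction to any subset of the form ∏_{α<2^κ} Y_α with Y_α ⊆ X_α and 1 ≤ |Y_α| ≤ 2 is continuous. -/
open Cardinal Set

universe u

/-- If a space has a dense set of size ≤ κ and `f` is continuous on every set of size ≤ κ,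
then `f` is continuous. -/
lemma dense_kappa_continuous {T : Type u} [TopologicalSpace T] (κ : Cardinal.{u})
    (hκ : Cardinal.aleph0 ≤ κ) (f : T → ℝ) (D : Set T) (hD : Dense D) (hDκ : #D ≤ κ)
    (h : ∀ A : Set T, #A ≤ κ → ContinuousOn f A) : Continuous f := by
  rw [continuous_iff_continuousAt]
  intro x
  have small : ∀ t : T, #(insert t D : Set T) ≤ κ := fun t =>
    (Cardinal.mk_insert_le).trans (by
      calc #D + 1 ≤ κ + 1 := by gcongr
        _ = κ := Cardinal.add_one_eq hκ)
  rw [ContinuousAt, Metric.tendsto_nhds]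
  intro ε hε
  have hx : ContinuousWithinAt f (insert x D) x :=
    (h _ (small x)) x (mem_insert x D)
  have hx' : f ⁻¹' Metric.ball (f x) (ε/3) ∈ nhdsWithin x (insert x D) :=
    hx (Metric.ball_mem_nhds _ (by positivity))
  obtain ⟨U, hUo, hxU, hU⟩ := mem_nhdsWithin.mp hx'
  filter_upwards [hUo.mem_nhds hxU] with y hyU
  have hy : ContinuousWithinAt f (insert y D) y :=
    (h _ (small y)) y (mem_insert y D)
  have hy' : f ⁻¹' Metric.ball (f y) (ε/3) ∈ nhdsWithin y (insert y D) :=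
    hy (Metric.ball_mem_nhds _ (by positivity))
  obtain ⟨V, hVo, hyV, hV⟩ := mem_nhdsWithin.mp hy'
  obtain ⟨d, ⟨hdU, hdV⟩, hdD⟩ :=
    hD.inter_open_nonempty (U ∩ V) (hUo.inter hVo) ⟨y, hyU, hyV⟩
  have h1 : dist (f d) (f x) < ε/3 := hU ⟨hdU, mem_insert_of_mem _ hdD⟩
  have h2 : dist (f d) (f y) < ε/3 := hV ⟨hdV, mem_insert_of_mem _ hdD⟩
  calc dist (f y) (f x) ≤ dist (f y) (f d) + dist (f d) (f x) := dist_triangle _ _ _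
    _ < ε/3 + ε/3 := by rw [dist_comm (f y) (f d)]; exact add_lt_add h2 h1
    _ < ε := by linarith

/-- Hewitt–Marczewski–Pondiczery for products of at most `2 ^ κ` spaces with at most two
points each: there is a dense set of size at most `κ`. -/
lemma exists_small_dense {κ : Cardinal.{u}} (hκ : Cardinal.aleph0 ≤ κ) {ι : Type u}
    (hι : #ι ≤ 2 ^ κ) {Z : ι → Type u} [∀ i, TopologicalSpace (Z i)] [∀ i, Nonempty (Z i)]
    (hZ2 : ∀ i, #(Z i) ≤ 2) :
    ∃ D : Set (∀ i, Z i), Dense D ∧ #D ≤ κ := by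
  classical
  set K := κ.out with hKdef
  have hK : #K = κ := Cardinal.mk_out κ
  haveI : Infinite K := Cardinal.infinite_iff.mpr (by rw [hK]; exact hκ)
  set B := ULift.{u, 0} Bool with hBdef
  have hB : #B = 2 := by simp [hBdef, Cardinal.mk_uLift, Cardinal.mk_bool, Cardinal.lift_two]
  -- an injection of ι into K → B
  have hcard : #ι ≤ #(K → B) := by
    rw [← Cardinal.power_def, hB, hK]; exact hι
  obtain ⟨e⟩ := (Cardinal.le_def _ _).mp hcard
  -- surjections B → Z i
  have hy : ∀ i, ∃ y : B → Z i, Function.Surjective y := by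
    intro i
    have : #(Z i) ≤ #B := by rw [hB]; exact hZ2 i
    obtain ⟨m⟩ := (Cardinal.le_def _ _).mp this
    exact ⟨Function.invFun m, Function.invFun_surjective m.injective⟩
  choose y hy using hy
  -- the parameter space
  set P := Σ s : Finset K, ((s → B) → B) with hPdef
  set d : P → ∀ i, Z i := fun p i => y i (p.2 (fun α => e i α.1)) with hddef
  refine ⟨Set.range d, ?_, ?_⟩
  · -- density
    rw [(isTopologicalBasis_pi (fun i => TopologicalSpace.isTopologicalBasis_opens)).dense_iff]
    rintro o ⟨U, F, hUopen, rfl⟩ ⟨z, hz⟩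
    rw [Set.mem_pi] at hz
    -- boolean codes for the values z i
    have hb : ∀ i, ∃ c : B, y i c = z i := fun i => hy i (z i)
    choose b hb using hb
    -- separating coordinates
    have sep : ∀ i j : ι, i ≠ j → ∃ α, e i α ≠ e j α := fun i j hij =>
      Function.ne_iff.mp (fun h => hij (e.injective h))
    set w : ι → ι → Finset K := fun i j =>
      if h : i = j then ∅ else {(sep i j h).choose} with hwdef
    set s : Finset K := F.biUnion (fun i => F.biUnion (w i)) with hsdef
    have key : ∀ i ∈ F, ∀ j ∈ F,
        (fun α : s => e i α.1) = (fun α : s => e j α.1) → i = j := by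
      intro i hi j hj hfun
      by_contra hij
      have hα : (sep i j hij).choose ∈ s := by
        apply Finset.mem_biUnion.mpr
        refine ⟨i, hi, Finset.mem_biUnion.mpr ⟨j, hj, ?_⟩⟩
        rw [hwdef]; simp [hij]
      have := congrFun hfun ⟨(sep i j hij).choose, hα⟩
      exact (sep i j hij).choose_spec this
    set g : (s → B) → B := fun h =>
      if hh : ∃ i, i ∈ F ∧ (fun α : s => e i α.1) = h then b hh.choose else ULift.up false with hgdef
    refine ⟨d ⟨s, g⟩, ?_, ⟨⟨s, g⟩, rfl⟩⟩
    rw [Set.mem_pi]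
    intro i hi
    have hhh : ∃ i', i' ∈ F ∧ (fun α : s => e i' α.1) = (fun α : s => e i α.1) :=
      ⟨i, hi, rfl⟩
    have : d ⟨s, g⟩ i = y i (b hhh.choose) := by
      simp only [hddef, hgdef]
      rw [dif_pos hhh]
    rw [this]
    have hi' : hhh.choose = i := key _ hhh.choose_spec.1 _ hi hhh.choose_spec.2
    rw [hi', hb i]
    exact hz i hi
  · -- cardinality
    refine (Cardinal.mk_range_le).trans ?_
    have h1 : #P ≤ #(Finset K) * κ := by
      rw [hPdef, Cardinal.mk_sigma]
      refine (Cardinal.sum_le_sum _ (fun _ => κ) ?_).trans_eq (Cardinal.sum_const' _ _)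
      intro s
      exact le_trans (le_of_lt (Cardinal.lt_aleph0_of_finite _)) hκ
    refine h1.trans ?_
    rw [Cardinal.mk_finset_of_infinite, hK, Cardinal.mul_eq_self hκ]

/-- Every κ-continuous real-valued function on a product of 2^κ spaces is 2-continuous. -/
theorem kappaContinuous_is_twoContinuous
    (κ : Cardinal.{u}) (hκ : Cardinal.aleph0 ≤ κ)
    {ι : Type u} (hι : #ι = 2 ^ κ)
    {X : ι → Type u} [∀ i, TopologicalSpace (X i)]
    (f : (∀ i, X i) → ℝ)
    (hkappa : ∀ A : Set (∀ i, X i), #A ≤ κ → Continuous (A.restrict f)) :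
    ∀ Y : ∀ i, Set (X i), (∀ i, (Y i).Nonempty ∧ #(Y i) ≤ 2) →
      Continuous ((Set.pi Set.univ Y).restrict f) := by
  intro Y hY
  haveI : ∀ i, Nonempty (Y i) := fun i => (hY i).1.to_subtype
  obtain ⟨D, hD, hDκ⟩ := exists_small_dense hκ hι.le (Z := fun i => (Y i : Type u))
    (fun i => (hY i).2)
  set j : (∀ i, Y i) → (∀ i, X i) := fun z i => (z i : X i) with hjdef
  have hj : Continuous j := continuous_pi fun i => continuous_subtype_val.comp (continuous_apply i)
  set f' : (∀ i, Y i) → ℝ := f ∘ j with hf'def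
  have hf' : Continuous f' := by
    refine dense_kappa_continuous κ hκ f' D hD hDκ ?_
    intro A hA
    have hA' : ContinuousOn f (j '' A) :=
      continuousOn_iff_continuous_restrict.mpr (hkappa _ ((Cardinal.mk_image_le).trans hA))
    exact hA'.comp hj.continuousOn (A.mapsTo_image j)
  have hψ : Continuous (fun w : (Set.pi Set.univ Y) => fun i => (⟨w.1 i, w.2 i (mem_univ i)⟩ : Y i)) :=
    continuous_pi fun i => Continuous.subtype_mk ((continuous_apply i).comp continuous_subtype_val) _
  exact hf'.comp hψ
end

section
/- Hewitt–Marczewski–Pondiczery theorem: if κ is an infinite cardinal and {Y_α : α < 2^κ} is a family of topological spaces each with a dense subset of cardinality ≤ κ, then the product ∏_{α<2^κ} Y_α has a dense subset of cardinality ≤ κ. -/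
open Cardinal Set

/-- Hewitt–Marczewski–Pondiczery theorem. -/
theorem hewitt_marczewski_pondiczery
    (κ : Cardinal.{u}) (hκ : Cardinal.aleph0 ≤ κ)
    {ι : Type u} (hι : #ι = 2 ^ κ)
    {Y : ι → Type u} [∀ i, TopologicalSpace (Y i)] [∀ i, Nonempty (Y i)]
    (D : ∀ i, Set (Y i)) (hdense : ∀ i, Dense (D i)) (hcard : ∀ i, #(D i) ≤ κ) :
    ∃ E : Set (∀ i, Y i), Dense E ∧ #E ≤ κ := by
  classical
  -- a type of cardinality κ
  set K : Type u := κ.out with hK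
  have hmkK : #K = κ := Cardinal.mk_out κ
  haveI : Infinite K := Cardinal.infinite_iff.mpr (hmkK ▸ hκ)
  haveI : Nonempty K := inferInstance
  -- embed ι into K → ULift.{u} Bool
  have hcardι : #ι = #(K → ULift.{u} Bool) := by
    have hb : #(ULift.{u} Bool) = 2 := by simp
    rw [hι, ← hmkK, ← hb, Cardinal.power_def]
  obtain ⟨e⟩ : Nonempty (ι ≃ (K → ULift.{u} Bool)) := Cardinal.eq.mp hcardι
  -- surjections from K onto the dense sets
  have hσ : ∀ i, ∃ σ : K → Y i, (∀ k, σ k ∈ D i) ∧ ∀ d ∈ D i, ∃ k, σ k = d := by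
    intro i
    obtain ⟨j⟩ : Nonempty (D i ↪ K) :=
      Cardinal.le_def _ _ |>.mp ((hcard i).trans_eq hmkK.symm)
    haveI hne : Nonempty (D i) := ((hdense i).nonempty).to_subtype
    refine ⟨fun k => ((Function.invFun (⇑j) k : D i) : Y i), fun k => (Function.invFun (⇑j) k).2, ?_⟩
    intro d hd
    refine ⟨j ⟨d, hd⟩, ?_⟩
    simp only []
    rw [Function.leftInverse_invFun j.injective ⟨d, hd⟩]
  choose σ hσmem hσsurj using hσ
  -- the candidate dense set
  let Φ : (Σ s : Finset K, ((s → ULift.{u} Bool) → K)) → (∀ i, Y i) :=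
    fun p i => σ i (p.2 fun k => e i k.1)
  refine ⟨Set.range Φ, ?_, ?_⟩
  · -- density
    rw [(isTopologicalBasis_pi
      (fun i => TopologicalSpace.isTopologicalBasis_opens (α := Y i))).dense_iff]
    rintro o ⟨U, F, hU, rfl⟩ ⟨g0, hg0⟩
    rw [Set.mem_pi] at hg0
    -- pick, for each i ∈ F, a k with σ i k ∈ U i
    have hk : ∀ i ∈ F, ∃ k, σ i k ∈ U i := by
      intro i hi
      obtain ⟨d, hdU, hdD⟩ :=
        (hdense i).inter_open_nonempty (U i) (hU i hi) ⟨g0 i, hg0 i hi⟩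
      obtain ⟨k, hk⟩ := hσsurj i d hdD
      exact ⟨k, hk ▸ hdU⟩
    let kf : ι → K := fun i => if h : ∃ k, σ i k ∈ U i then h.choose else Classical.arbitrary K
    have hkf : ∀ i ∈ F, σ i (kf i) ∈ U i := by
      intro i hi
      have h := hk i hi
      simp only [kf, dif_pos h]
      exact h.choose_spec
    -- a finite set separating the (distinct) functions e i, i ∈ F
    let w : ι → ι → K := fun i j =>
      if h : e i ≠ e j then (Function.ne_iff.mp h).choose else Classical.arbitrary K
    have hw : ∀ i j, e i ≠ e j → e i (w i j) ≠ e j (w i j) := by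
      intro i j h
      simp only [w, dif_pos h]
      exact (Function.ne_iff.mp h).choose_spec
    let s : Finset K := F.biUnion fun i => F.image (w i)
    -- the restriction map is injective on F
    let r : ι → (s → ULift.{u} Bool) := fun i k => e i k.1
    have hrinj : ∀ i ∈ F, ∀ j ∈ F, r i = r j → i = j := by
      intro i hi j hj hr
      by_contra hij
      have hne : e i ≠ e j := fun h => hij (e.injective h)
      have hmem : w i j ∈ s := by
        simp only [s, Finset.mem_biUnion]
        exact ⟨i, hi, Finset.mem_image_of_mem _ hj⟩
      exact hw i j hne (congrFun hr ⟨w i j, hmem⟩)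
    -- define the value assignment
    let c : (s → ULift.{u} Bool) → K := fun t =>
      if h : ∃ i, i ∈ F ∧ r i = t then kf h.choose else Classical.arbitrary K
    refine ⟨Φ ⟨s, c⟩, ?_, Set.mem_range_self _⟩
    rw [Set.mem_pi]
    intro i hi
    have h : ∃ j, j ∈ F ∧ r j = r i := ⟨i, hi, rfl⟩
    have hΦ : Φ ⟨s, c⟩ i = σ i (c (r i)) := rfl
    have hc : c (r i) = kf i := by
      simp only [c, dif_pos h]
      rw [hrinj h.choose h.choose_spec.1 i hi h.choose_spec.2]
    rw [hΦ, hc]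
    exact hkf i hi
  · -- cardinality
    refine Cardinal.mk_range_le.trans ?_
    rw [Cardinal.mk_sigma]
    have hle : ∀ s : Finset K, #((s → ULift.{u} Bool) → K) ≤ κ := by
      intro s
      rw [← Cardinal.power_def, hmkK, Cardinal.mk_fintype]
      exact_mod_cast Cardinal.power_nat_le hκ
    calc (Cardinal.sum fun s : Finset K => #((s → ULift.{u} Bool) → K))
        ≤ Cardinal.sum fun _ : Finset K => κ := Cardinal.sum_le_sum _ _ hle
      _ = #(Finset K) * κ := Cardinal.sum_const' _ _
      _ = κ * κ := by rw [Cardinal.mk_finset_of_infinite, hmkK]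
      _ = κ := Cardinal.mul_eq_self hκ
end

section
/- Let κ, λ be infinite cardinals and {X_α : α < λ} a family of compact Hausdorff spaces with t₀(X_α) ≤ κ for every α < λ. Then every κ-continuous function f : ∏_{α<λ} X_α → ℝ is σ-continuous, i.e., its restriction to every σ-product in ∏_{α<λ} X_α is continuous. -/
/-!
Let `r_F p = F.piecewise p a` keep the coordinates of `p` in the finite set `F` and reset the
others to `a`. A κ-continuous `g` with `g ∘ r_F = g` is continuous, by induction on `F`: when a
coordinate `j` is added, the slices of `g` along `X j` are continuous since `t₀(X j) ≤ κ`, and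
`|g p - g x₀|` is at most the supremum over `t ∈ X j` of the distance between the slices through
`p` and `x₀` plus a term continuous in `p j`; that supremum is κ-continuous and invariant under
`r_F`, hence continuous. So every `f ∘ r_F` is continuous. If `f` were discontinuous at `x` on
the σ-product, there would be bad points `y n` of the σ-product, supported in increasing finite
sets `F (n + 1)`, with `f ∘ r_{F k}` close to `f x` at every later `y n`. At a cluster point `z`
of the `y n` we get `r_{F k} z → z`, and continuity of `f` on the countable set
`{z} ∪ {y n} ∪ {r_{F k} z}` makes `f z` both far from and close to `f x`.
-/

open Cardinal Set Filter Topology Function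

universe u

namespace Cardinal

variable {κ : Cardinal.{u}} {α β : Type u}

lemma mk_insert_le_of_aleph0_le_s8 (hκ : ℵ₀ ≤ κ) {s : Set α} (hs : #s ≤ κ) (a : α) :
    #(insert a s : Set α) ≤ κ :=
  mk_insert_le.trans <| (add_le_add_left hs 1).trans (add_one_eq hκ).le

lemma mk_prod_le_of_aleph0_le (hκ : ℵ₀ ≤ κ) {s : Set α} {t : Set β} (hs : #s ≤ κ)
    (ht : #t ≤ κ) : #(s ×ˢ t : Set (α × β)) ≤ κ := by
  rw [mk_congr (Equiv.Set.prod s t), mk_prod, lift_id, lift_id]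
  exact (mul_le_mul' hs ht).trans (mul_eq_self hκ).le

end Cardinal

def KappaContinuous {Y : Type u} {Z : Type*} [TopologicalSpace Y] [TopologicalSpace Z]
    (κ : Cardinal.{u}) (f : Y → Z) : Prop :=
  ∀ A : Set Y, #A ≤ κ → ContinuousOn f A

namespace KappaContinuous

variable {κ : Cardinal.{u}} {Y Y' : Type u} {Z : Type*} [TopologicalSpace Y] [TopologicalSpace Y']
  [TopologicalSpace Z] {f : Y → Z}

lemma comp_continuous (hf : KappaContinuous κ f) {φ : Y' → Y} (hφ : Continuous φ) :
    KappaContinuous κ (f ∘ φ) :=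
  fun _ hA => (hf _ (mk_image_le.trans hA)).comp hφ.continuousOn (mapsTo_image _ _)

lemma continuousOn_of_countable (hκ : ℵ₀ ≤ κ) (hf : KappaContinuous κ f) {A : Set Y}
    (hA : A.Countable) : ContinuousOn f A :=
  hf A (hA.le_aleph0.trans hκ)

/-- The lower semicontinuity of the supremum only needs the maximiser at the base point; for the
upper semicontinuity, maximisers along an ultrafilter converge by compactness, and joint
κ-continuity on (these maximisers) × B passes the bound to the limit. -/
lemma iSup {T P : Type u} [TopologicalSpace T] [CompactSpace T] [Nonempty T]
    [TopologicalSpace P] (hκ : ℵ₀ ≤ κ) {q : T × P → ℝ} (hq : ∀ p, Continuous fun t => q (t, p))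
    (hqκ : KappaContinuous κ q) : KappaContinuous κ fun p => ⨆ t, q (t, p) := by
  intro B hB p₀ hp₀
  have hbdd : ∀ p, BddAbove (range fun t => q (t, p)) :=
    fun p => (isCompact_range (hq p)).bddAbove
  have hattained : ∀ p, ∃ t, q (t, p) = ⨆ t, q (t, p) :=
    fun p => (isCompact_range (hq p)).sSup_mem (range_nonempty _)
  choose tmax htmax using hattained
  have hqB : ∀ D : Set T, #D ≤ κ → ContinuousOn q (D ×ˢ B) :=
    fun D hD => hqκ _ (mk_prod_le_of_aleph0_le hκ hD hB)
  rw [continuousWithinAt_iff_lower_upperSemicontinuousWithinAt]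
  constructor
  · intro y (hy : y < ⨆ t, q (t, p₀))
    show ∀ᶠ p in 𝓝[B] p₀, y < ⨆ t, q (t, p)
    have hslice : ContinuousWithinAt (fun p => q (tmax p₀, p)) B p₀ :=
      ((hqB {tmax p₀} ((countable_singleton _).le_aleph0.trans hκ)).comp
        (continuous_const.prodMk continuous_id).continuousOn
        (fun p hp => ⟨rfl, hp⟩)).continuousWithinAt hp₀
    rw [← htmax p₀] at hy
    filter_upwards [hslice.eventually_const_lt hy] with p hp
    exact hp.trans_le (le_ciSup (hbdd p) _)
  · intro y (hy : ⨆ t, q (t, p₀) < y)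
    by_contra hfreq
    have : (𝓝[B] p₀ ⊓ 𝓟 {p | y ≤ ⨆ t, q (t, p)}).NeBot := by
      simpa [frequently_iff_neBot] using not_eventually.mp hfreq
    obtain ⟨U, hU⟩ := Ultrafilter.exists_le (𝓝[B] p₀ ⊓ 𝓟 {p | y ≤ ⨆ t, q (t, p)})
    set ts := (U.map tmax).lim
    have hts : Tendsto tmax U (𝓝 ts) := (U.map tmax).le_nhds_lim
    have hUB : (U : Filter P) ≤ 𝓝[B] p₀ := hU.trans inf_le_left
    have hlim : Tendsto (fun p => (tmax p, p)) U (𝓝[insert ts (tmax '' B) ×ˢ B] (ts, p₀)) :=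
      tendsto_nhdsWithin_iff.2 ⟨hts.prodMk_nhds (hUB.trans nhdsWithin_le_nhds),
        (eventually_mem_nhdsWithin.filter_mono hUB).mono fun p hp =>
          ⟨mem_insert_of_mem _ ⟨p, hp, rfl⟩, hp⟩⟩
    have hmax : Tendsto (fun p => q (tmax p, p)) U (𝓝 (q (ts, p₀))) :=
      ((hqB _ (mk_insert_le_of_aleph0_le_s8 hκ (mk_image_le.trans hB) _)) _
        ⟨mem_insert _ _, hp₀⟩).tendsto.comp hlim
    have hyU : ∀ᶠ p in (U : Filter P), y ≤ ⨆ t, q (t, p) :=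
      hU.trans inf_le_right (mem_principal_self _)
    have hge : y ≤ q (ts, p₀) := ge_of_tendsto hmax <| hyU.mono fun p hp => (htmax p).symm ▸ hp
    exact (hge.trans (le_ciSup (hbdd p₀) ts)).not_gt hy

end KappaContinuous

lemma Filter.exists_monotone_seq_of_forall_mem {Y α : Type*} [SemilatticeSup α] {l : Filter Y}
    {V : α → Set Y} {F₀ : α} (hV : ∀ F, F₀ ≤ F → V F ∈ l) {Q : Y → α → Prop}
    (hQ : ∀ U ∈ l, ∃ y ∈ U, ∃ G, Q y G) :
    ∃ (F : ℕ → α) (y : ℕ → Y), Monotone F ∧ (∀ n, ∃ G ≤ F (n + 1), Q (y n) G) ∧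
      ∀ k n, k ≤ n → y n ∈ V (F k) := by
  have : Nonempty Y := let ⟨y, _⟩ := hQ _ (hV F₀ le_rfl); ⟨y⟩
  have : Nonempty α := ⟨F₀⟩
  choose! pick hpick G hG using hQ
  let next : α × Set Y → α × Set Y := fun s => (s.1 ⊔ G s.2, s.2 ∩ V (s.1 ⊔ G s.2))
  let S : ℕ → α × Set Y := fun n => next^[n] (F₀, V F₀)
  have hS : ∀ n, S (n + 1) = next (S n) := fun n => iterate_succ_apply' _ _ _
  have hSl : ∀ n, F₀ ≤ (S n).1 ∧ (S n).2 ∈ l := by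
    intro n
    induction n with
    | zero => exact ⟨le_rfl, hV F₀ le_rfl⟩
    | succ n ih =>
      rw [hS]
      exact ⟨ih.1.trans le_sup_left, inter_mem ih.2 (hV _ (ih.1.trans le_sup_left))⟩
  have hSV : ∀ k, (S k).2 ⊆ V (S k).1 := by
    rintro (_ | k)
    · exact subset_rfl
    · rw [hS]
      exact inter_subset_right
  have hanti : Antitone fun n => (S n).2 :=
    antitone_nat_of_succ_le fun n => (hS n).symm ▸ inter_subset_left
  refine ⟨fun n => (S n).1, fun n => pick (S n).2,
    monotone_nat_of_le_succ fun n => (hS n).symm ▸ le_sup_left,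
    fun n => ⟨G (S n).2, by simp only [hS]; exact le_sup_right, hG _ (hSl n).2⟩,
    fun k n hkn => hSV k (hanti hkn (hpick _ (hSl n).2))⟩

section Product

variable {ι : Type u} {X : ι → Type u} [DecidableEq ι]

lemma piecewise_insert_update_piecewise (F : Finset ι) (j : ι) (x a : ∀ i, X i) (t : X j) :
    (insert j F).piecewise (update (F.piecewise x a) j t) a =
      (insert j F).piecewise (update x j t) a := by
  refine Finset.piecewise_congr _ (fun i hi => ?_) fun _ _ => rfl
  rcases eq_or_ne i j with rfl | hij
  · simp
  · simp [update_of_ne hij, Finset.piecewise_eq_of_mem _ _ _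
      ((Finset.mem_insert.1 hi).resolve_left hij)]

variable [∀ i, TopologicalSpace (X i)]

lemma continuous_finset_piecewise (F : Finset ι) (a : ∀ i, X i) :
    Continuous fun p : ∀ i, X i => F.piecewise p a :=
  continuous_pi fun i => by
    by_cases hi : i ∈ F
    · simpa only [Finset.piecewise_eq_of_mem _ _ _ hi] using continuous_apply i
    · simpa only [Finset.piecewise_eq_of_notMem _ _ _ hi] using continuous_const

theorem continuous_of_kappaContinuous_of_piecewise_invariant [∀ i, CompactSpace (X i)]
    {κ : Cardinal.{u}} (hκ : ℵ₀ ≤ κ) (ht0 : ∀ i (g : X i → ℝ), KappaContinuous κ g → Continuous g)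
    (a : ∀ i, X i) (F : Finset ι) {g : (∀ i, X i) → ℝ} (hgF : ∀ p, g (F.piecewise p a) = g p)
    (hg : KappaContinuous κ g) : Continuous g := by
  induction F using Finset.induction_on generalizing g with
  | empty => exact continuous_const.congr fun p => by rw [← hgF p, Finset.piecewise_empty]
  | @insert j F _ IH =>
    have : Nonempty (X j) := ⟨a j⟩
    have hslice : ∀ y, Continuous fun t : X j => g (update y j t) :=
      fun y => ht0 j _ (hg.comp_continuous (continuous_const.update j continuous_id))
    refine continuous_iff_continuousAt.2 fun x₀ => ?_
    set q : X j × (∀ i, X i) → ℝ := fun p => |g (update p.2 j p.1) - g (update x₀ j p.1)|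
    have hq : ∀ p, Continuous fun t => q (t, p) := fun p => ((hslice p).sub (hslice x₀)).abs
    have hqκ : KappaContinuous κ q := fun A hA =>
      ((hg.comp_continuous (continuous_snd.update j continuous_fst) A hA).sub
        (hg.comp_continuous (continuous_const.update j continuous_fst) A hA)).abs
    have hqF : ∀ x, (fun p => ⨆ t, q (t, p)) (F.piecewise x a) = ⨆ t, q (t, x) := by
      intro x
      simp only [q]
      congr! 4 with t
      rw [← hgF (update (F.piecewise x a) j t), ← hgF (update x j t),
        piecewise_insert_update_piecewise]
    have hsup : Continuous fun p => ⨆ t, q (t, p) := IH hqF (hg := hqκ.iSup hκ hq)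
    have hbound : ∀ p, dist (g p) (g x₀) ≤ (⨆ t, q (t, p)) + |g (update x₀ j (p j)) - g x₀| :=
      fun p => calc
        dist (g p) (g x₀) ≤ |g p - g (update x₀ j (p j))| + |g (update x₀ j (p j)) - g x₀| :=
          abs_sub_le _ _ _
        _ ≤ (⨆ t, q (t, p)) + |g (update x₀ j (p j)) - g x₀| := by
          gcongr
          simpa [q] using le_ciSup (isCompact_range (hq p)).bddAbove (p j)
    have hlim : Tendsto (fun p => (⨆ t, q (t, p)) + |g (update x₀ j (p j)) - g x₀|) (𝓝 x₀)
        (𝓝 0) := by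
      have hzero : (⨆ t, q (t, x₀)) + |g (update x₀ j (x₀ j)) - g x₀| = 0 := by simp [q]
      rw [← hzero]
      exact (hsup.add (((hslice x₀).comp (continuous_apply j)).sub
        continuous_const).abs).tendsto x₀
    exact tendsto_iff_dist_tendsto_zero.2 (squeeze_zero (fun _ => dist_nonneg) hbound hlim)

lemma tendsto_finset_piecewise_of_tendsto {a : ∀ i, X i} {F : ℕ → Finset ι} (hF : Monotone F)
    {y : ℕ → ∀ i, X i} (hy : ∀ n, ∀ i ∉ F (n + 1), y n i = a i) {l : Filter ℕ} [l.NeBot]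
    {z : ∀ i, X i} (hz : Tendsto y l (𝓝 z)) :
    Tendsto (fun k => (F k).piecewise z a) atTop (𝓝 z) := by
  refine tendsto_pi_nhds.2 fun i => ?_
  by_cases hi : ∃ m, i ∈ F m
  · obtain ⟨m, hm⟩ := hi
    refine tendsto_const_nhds.congr' ?_
    filter_upwards [eventually_ge_atTop m] with k hk
    rw [Finset.piecewise_eq_of_mem _ _ _ (hF hk hm)]
  · rw [not_exists] at hi
    have hyi : Tendsto (fun _ : ℕ => a i) l (𝓝 (z i)) :=
      ((continuous_apply i).tendsto z).comp hz |>.congr fun n => hy n i (hi _)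
    simp only [Finset.piecewise_eq_of_notMem _ _ _ (hi _)]
    rwa [Tendsto, Filter.map_const] at hyi ⊢

theorem continuousWithinAt_setOf_finite_ne [∀ i, CompactSpace (X i)] {f : (∀ i, X i) → ℝ}
    (hf : ∀ A : Set (∀ i, X i), A.Countable → ContinuousOn f A) {a : ∀ i, X i}
    (hfa : ∀ F : Finset ι, Continuous fun p => f (F.piecewise p a)) {x : ∀ i, X i}
    (hx : {i | x i ≠ a i}.Finite) : ContinuousWithinAt f {x | {i | x i ≠ a i}.Finite} x := by
  refine Metric.continuousWithinAt_iff'.2 fun ε hε => ?_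
  by_contra hfreq
  have hbad : ∀ U ∈ 𝓝 x, ∃ b ∈ U, ∃ G : Finset ι,
      (∀ i ∉ G, b i = a i) ∧ ε ≤ dist (f b) (f x) := by
    intro U hU
    obtain ⟨b, hbU, hbε, hb⟩ :=
      frequently_iff.1 (frequently_nhdsWithin_iff.1 (not_eventually.1 hfreq)) hU
    exact ⟨b, hbU, hb.toFinset, fun i hi => not_not.1 fun h => hi (hb.mem_toFinset.2 h),
      not_lt.1 hbε⟩
  have hnear : ∀ F, hx.toFinset ≤ F → {b | dist (f (F.piecewise b a)) (f x) < ε / 2} ∈ 𝓝 x := by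
    intro F hF
    have hxF : F.piecewise x a = x := funext fun i => by
      by_cases hi : i ∈ F
      · exact Finset.piecewise_eq_of_mem _ _ _ hi
      · rw [Finset.piecewise_eq_of_notMem _ _ _ hi]
        exact (not_not.1 fun h => hi (hF (hx.mem_toFinset.2 h))).symm
    have := ((hfa F).continuousAt (x := x)).preimage_mem_nhds
      (Metric.ball_mem_nhds _ (half_pos hε))
    rwa [hxF] at this
  obtain ⟨F, y, hF, hyG, hyV⟩ := exists_monotone_seq_of_forall_mem hnear hbad
  choose G hGF hGy hyε using hyG
  obtain ⟨l, hl⟩ := Ultrafilter.exists_le (atTop : Filter ℕ)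
  set z := (l.map y).lim
  have hz : Tendsto y l (𝓝 z) := (l.map y).le_nhds_lim
  have hr := tendsto_finset_piecewise_of_tendsto hF
    (fun n i hi => hGy n i fun h => hi (hGF n h)) hz
  set A := insert z (range y ∪ range fun k => (F k).piecewise z a)
  have hfA : ContinuousWithinAt f A z :=
    hf A (((countable_range y).union (countable_range _)).insert z) z (mem_insert z _)
  have hfar : ε ≤ dist (f z) (f x) :=
    ge_of_tendsto ((hfA.tendsto.comp (tendsto_nhdsWithin_iff.2 ⟨hz, .of_forall fun n =>
      mem_insert_of_mem _ (.inl (mem_range_self n))⟩)).dist tendsto_const_nhds)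
      (.of_forall hyε)
  have hclose : ∀ k, dist (f ((F k).piecewise z a)) (f x) ≤ ε / 2 := fun k =>
    le_of_tendsto ((((hfa (F k)).tendsto z).comp hz).dist tendsto_const_nhds)
      (((eventually_ge_atTop k).filter_mono hl).mono fun n hn => (hyV k n hn).le)
  have : dist (f z) (f x) ≤ ε / 2 :=
    le_of_tendsto ((hfA.tendsto.comp (tendsto_nhdsWithin_iff.2 ⟨hr, .of_forall fun k =>
      mem_insert_of_mem _ (.inr (mem_range_self k))⟩)).dist tendsto_const_nhds)
      (.of_forall hclose)
  linarith

end Product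

theorem kappaContinuous_is_sigmaContinuous_general
    (κ : Cardinal.{u}) (hκ : Cardinal.aleph0 ≤ κ)
    {ι : Type u}
    {X : ι → Type u} [∀ i, TopologicalSpace (X i)]
    [∀ i, CompactSpace (X i)]
    (ht0 : ∀ i, ∀ g : X i → ℝ,
      (∀ A : Set (X i), #A ≤ κ → Continuous (A.restrict g)) → Continuous g)
    (f : (∀ i, X i) → ℝ)
    (hkappa : ∀ A : Set (∀ i, X i), #A ≤ κ → Continuous (A.restrict f)) :
    ∀ a : ∀ i, X i,
      Continuous (({x : ∀ i, X i | {i | x i ≠ a i}.Finite}).restrict f) := by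
  classical
  intro a
  have hf : KappaContinuous κ f := fun A hA =>
    continuousOn_iff_continuous_domRestrict.2 (hkappa A hA)
  have hfa : ∀ F : Finset ι, Continuous fun p => f (F.piecewise p a) := fun F =>
    continuous_of_kappaContinuous_of_piecewise_invariant hκ
      (fun i g hg => ht0 i g fun A hA => (hg A hA).domRestrict) a F
      (fun p => by rw [Finset.piecewise_idem_left])
      (hf.comp_continuous (continuous_finset_piecewise F a))
  exact ContinuousOn.domRestrict fun x hx =>
    continuousWithinAt_setOf_finite_ne (fun A hA => hf.continuousOn_of_countable hκ hA) hfa hx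

/-- Every κ-continuous real-valued function on a product of compacta of functional
tightness ≤ κ is σ-continuous. -/
theorem kappaContinuous_is_sigmaContinuous
    (κ : Cardinal.{u}) (hκ : Cardinal.aleph0 ≤ κ)
    {ι : Type u} [Infinite ι]
    {X : ι → Type u} [∀ i, TopologicalSpace (X i)]
    [∀ i, CompactSpace (X i)] [∀ i, T2Space (X i)]
    (ht0 : ∀ i, ∀ g : X i → ℝ,
      (∀ A : Set (X i), #A ≤ κ → Continuous (A.restrict g)) → Continuous g)
    (f : (∀ i, X i) → ℝ)
    (hkappa : ∀ A : Set (∀ i, X i), #A ≤ κ → Continuous (A.restrict f)) :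
    ∀ a : ∀ i, X i,
      Continuous (({x : ∀ i, X i | {i | x i ≠ a i}.Finite}).restrict f) :=
  kappaContinuous_is_sigmaContinuous_general κ hκ ht0 f hkappa
end

section
/- (Okunev) If X is a locally compact Hausdorff space and Y a Tychonoff space, then t_m(X × Y) ≤ t_m(X)·t_m(Y), where t_m denotes minitightness (the least infinite κ such that every strictly κ-continuous real-valued function is continuous). -/
/-!
Let κ = max (t_m X) (t_m Y) and let f : X × Y → ℝ be strictly κ-continuous. Every slice
`f (·, y)` is strictly κ-continuous on X, hence continuous. Fix (a, b), a compact
neighbourhood K of a, and put u y = sup_{x ∈ K} |f (x, y) - f (x, b)|; then u b = 0 and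
|f (x, y) - f (a, b)| ≤ u y + |f (x, b) - f (a, b)| on K × Y, so continuity of f at (a, b)
reduces to continuity of u. For that, given B ⊆ Y with |B| ≤ κ, pick for each y ∈ B a point
of K where the supremum defining u y is attained, let D be the set of these points, and let g
be continuous and equal to f on D × B. Then g (·, y) = f (·, y) on the closure of D for y ∈ B,
so y ↦ sup over K ∩ closure D of |g (x, y) - f (x, b)| is continuous and agrees with u on B.
Hence u is strictly κ-continuous on Y, and so continuous.
-/

universe u

open Cardinal Set

/-- The minitightness of a space: the least infinite cardinal κ such that every
strictly κ-continuous real-valued function is continuous. -/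
noncomputable def minitightness (X : Type u) [TopologicalSpace X] : Cardinal.{u} :=
  sInf {κ : Cardinal.{u} | Cardinal.aleph0 ≤ κ ∧
    ∀ f : X → ℝ,
      (∀ A : Set X, #A ≤ κ → ∃ g : X → ℝ, Continuous g ∧ ∀ x ∈ A, g x = f x) →
      Continuous f}

open Filter Topology

def StrictlyContinuous {Z : Type u} [TopologicalSpace Z] (κ : Cardinal.{u}) (f : Z → ℝ) :
    Prop :=
  ∀ A : Set Z, #A ≤ κ → ∃ g : Z → ℝ, Continuous g ∧ ∀ x ∈ A, g x = f x

namespace StrictlyContinuous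

variable {Z : Type u} [TopologicalSpace Z] {κ κ' : Cardinal.{u}} {f : Z → ℝ}

theorem mono (hf : StrictlyContinuous κ' f) (hκ : κ ≤ κ') : StrictlyContinuous κ f :=
  fun A hA => hf A (hA.trans hκ)

theorem comp_continuous {W : Type u} [TopologicalSpace W] (hf : StrictlyContinuous κ f)
    {e : W → Z} (he : Continuous e) : StrictlyContinuous κ (f ∘ e) := by
  intro A hA
  obtain ⟨g, hg, hgf⟩ := hf (e '' A) (mk_image_le.trans hA)
  exact ⟨g ∘ e, hg.comp he, fun x hx => hgf (e x) (mem_image_of_mem e hx)⟩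

end StrictlyContinuous

section Minitightness

variable {Z : Type u} [TopologicalSpace Z]

variable (Z) in
theorem minitightness_spec :
    ℵ₀ ≤ minitightness Z ∧
      ∀ f : Z → ℝ, StrictlyContinuous (minitightness Z) f → Continuous f := by
  apply csInf_mem
    (s := {κ | ℵ₀ ≤ κ ∧ ∀ f : Z → ℝ, StrictlyContinuous κ f → Continuous f})
  refine ⟨max ℵ₀ #Z, le_max_left _ _, fun f hf => ?_⟩
  obtain ⟨g, hg, hgf⟩ := hf univ (mk_univ.trans_le (le_max_right _ _))
  rwa [← funext fun x => hgf x (mem_univ x)]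

variable (Z) in
theorem aleph0_le_minitightness : ℵ₀ ≤ minitightness Z :=
  (minitightness_spec Z).1

theorem StrictlyContinuous.continuous {κ : Cardinal.{u}} {f : Z → ℝ}
    (hf : StrictlyContinuous κ f) (hκ : minitightness Z ≤ κ) : Continuous f :=
  (minitightness_spec Z).2 f (hf.mono hκ)

theorem minitightness_le {κ : Cardinal.{u}} (hκ : ℵ₀ ≤ κ)
    (h : ∀ f : Z → ℝ, StrictlyContinuous κ f → Continuous f) : minitightness Z ≤ κ :=
  csInf_le' ⟨hκ, h⟩

end Minitightness

theorem sSup_image_eq_of_isMaxOn {α β : Type*} [ConditionallyCompleteLattice β] {φ : α → β}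
    {s : Set α} {x : α} (hx : x ∈ s) (hmax : IsMaxOn φ s x) : sSup (φ '' s) = φ x :=
  IsGreatest.csSup_eq ⟨mem_image_of_mem φ hx, forall_mem_image.2 hmax⟩

theorem continuousAt_of_abs_sub_le {X Y : Type*} [TopologicalSpace X] [TopologicalSpace Y]
    {f : X × Y → ℝ} {u : Y → ℝ} {K : Set X} {a : X} {b : Y} (hK : K ∈ 𝓝 a)
    (hfb : ContinuousAt (fun x => f (x, b)) a) (hu : ContinuousAt u b) (hub : u b = 0)
    (hle : ∀ x ∈ K, ∀ y, |f (x, y) - f (x, b)| ≤ u y) : ContinuousAt f (a, b) := by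
  have hfst : ContinuousAt (fun p : X × Y => f (p.1, b)) (a, b) :=
    ContinuousAt.comp (g := fun x => f (x, b)) hfb continuousAt_fst
  have hsnd : ContinuousAt (fun p : X × Y => u p.2) (a, b) :=
    hu.comp (continuousAt_snd (p := (a, b)))
  have hlo : Tendsto (fun p : X × Y => f (p.1, b) - u p.2) (𝓝 (a, b)) (𝓝 (f (a, b))) := by
    simpa [hub] using hfst.tendsto.sub hsnd.tendsto
  have hhi : Tendsto (fun p : X × Y => f (p.1, b) + u p.2) (𝓝 (a, b)) (𝓝 (f (a, b))) := by
    simpa [hub] using hfst.tendsto.add hsnd.tendsto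
  have hKprod : ∀ᶠ p : X × Y in 𝓝 (a, b), p.1 ∈ K := continuousAt_fst.preimage_mem_nhds hK
  have hnear : ∀ᶠ p : X × Y in 𝓝 (a, b), |f p - f (p.1, b)| ≤ u p.2 :=
    hKprod.mono fun p hp => hle p.1 hp p.2
  exact tendsto_of_tendsto_of_tendsto_of_le_of_le' hlo hhi
    (hnear.mono fun p hp => by linarith [abs_le.1 hp])
    (hnear.mono fun p hp => by linarith [abs_le.1 hp])

section SliceSupDist

variable {X Y : Type u}

noncomputable def sliceSupDist (f : X × Y → ℝ) (K : Set X) (b y : Y) : ℝ :=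
  sSup ((fun x => |f (x, y) - f (x, b)|) '' K)

theorem sliceSupDist_self (f : X × Y → ℝ) (K : Set X) (b : Y) : sliceSupDist f K b b = 0 :=
  le_antisymm (Real.sSup_nonpos (by simp)) (Real.sSup_nonneg (by simp))

theorem abs_sub_le_sliceSupDist [TopologicalSpace X] {f : X × Y → ℝ} {K : Set X}
    (hK : IsCompact K) (hslice : ∀ y, Continuous fun x => f (x, y)) (b y : Y) {x : X}
    (hx : x ∈ K) :
    |f (x, y) - f (x, b)| ≤ sliceSupDist f K b y :=
  le_csSup (hK.bddAbove_image ((hslice y).sub (hslice b)).abs.continuousOn) (mem_image_of_mem _ hx)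

theorem strictlyContinuous_sliceSupDist [TopologicalSpace X] [TopologicalSpace Y]
    {κ : Cardinal.{u}} (hκ : ℵ₀ ≤ κ) {f : X × Y → ℝ} (hf : StrictlyContinuous κ f)
    (hslice : ∀ y, Continuous fun x => f (x, y))
    {K : Set X} (hK : IsCompact K) (hKne : K.Nonempty) (b : Y) :
    StrictlyContinuous κ (sliceSupDist f K b) := by
  intro B hB
  choose xmax hxmaxK hxmax using fun y =>
    hK.exists_isMaxOn hKne ((hslice y).sub (hslice b)).abs.continuousOn
  set D := xmax '' B
  have hDB : #(D ×ˢ B) ≤ κ := by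
    rw [mk_setProd]
    exact (mul_le_mul' (mk_image_le.trans hB) hB).trans (mul_eq_self hκ).le
  obtain ⟨g, hg, hgf⟩ := hf (D ×ˢ B) hDB
  have hL : IsCompact (K ∩ closure D) := hK.inter_right isClosed_closure
  refine ⟨fun y => sSup ((fun x => |g (x, y) - f (x, b)|) '' (K ∩ closure D)),
    hL.continuous_sSup ((hg.comp continuous_swap).sub ((hslice b).comp continuous_snd)).abs,
    fun y hy => ?_⟩
  have hgf_slice : EqOn (fun x => g (x, y)) (fun x => f (x, y)) (closure D) :=
    EqOn.closure (fun x hx => hgf (x, y) ⟨hx, hy⟩) (by fun_prop) (hslice y)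
  have hxmaxL : xmax y ∈ K ∩ closure D :=
    ⟨hxmaxK y, subset_closure (mem_image_of_mem xmax hy)⟩
  calc sSup ((fun x => |g (x, y) - f (x, b)|) '' (K ∩ closure D))
      = sSup ((fun x => |f (x, y) - f (x, b)|) '' (K ∩ closure D)) := by
        rw [image_congr fun x hx => by rw [show g (x, y) = f (x, y) from hgf_slice hx.2]]
    _ = |f (xmax y, y) - f (xmax y, b)| :=
        sSup_image_eq_of_isMaxOn hxmaxL ((hxmax y).on_subset inter_subset_left)
    _ = sliceSupDist f K b y := (sSup_image_eq_of_isMaxOn (hxmaxK y) (hxmax y)).symm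

end SliceSupDist

theorem minitightness_prod_le_general
    {X Y : Type u} [TopologicalSpace X] [TopologicalSpace Y]
    [LocallyCompactSpace X] :
    minitightness (X × Y) ≤ max (minitightness X) (minitightness Y) := by
  have hκ : ℵ₀ ≤ max (minitightness X) (minitightness Y) :=
    (aleph0_le_minitightness X).trans (le_max_left _ _)
  refine minitightness_le hκ fun f hf => continuous_iff_continuousAt.2 ?_
  have hslice : ∀ y, Continuous fun x => f (x, y) := fun y =>
    (hf.comp_continuous (Continuous.prodMk_left y)).continuous (le_max_left _ _)
  rintro ⟨a, b⟩
  obtain ⟨K, hK, hKa⟩ := exists_compact_mem_nhds a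
  have hu : Continuous (sliceSupDist f K b) :=
    (strictlyContinuous_sliceSupDist hκ hf hslice hK ⟨a, mem_of_mem_nhds hKa⟩ b).continuous
      (le_max_right _ _)
  exact continuousAt_of_abs_sub_le hKa (hslice b).continuousAt hu.continuousAt
    (sliceSupDist_self f K b) fun x hx y => abs_sub_le_sliceSupDist hK hslice b y hx

/-- (Okunev) For a locally compact Hausdorff space X and a Tychonoff space Y,
t_m(X × Y) ≤ t_m(X) · t_m(Y) (the product of infinite cardinals is their maximum). -/
theorem minitightness_prod_le
    {X Y : Type u} [TopologicalSpace X] [TopologicalSpace Y]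
    [LocallyCompactSpace X] [T2Space X] [T35Space Y] :
    minitightness (X × Y) ≤ max (minitightness X) (minitightness Y) :=
  minitightness_prod_le_general
end

section
/- If λ is a measurable cardinal and μ : P(λ) → {0,1} is a nonprincipal λ-complete (in particular countably complete) two-valued measure, then the induced function μ : {0,1}^λ → {0,1} ⊆ ℝ (via identifying subsets of λ with their characteristic functions) is ω-continuous but not continuous with respect to the product topology on {0,1}^λ. -/
open scoped Classical
open Cardinal Set

/-- A measure induced by a nonprincipal countably complete ultrafilter on λ, viewed
as a real-valued function on the Cantor cube {0,1}^λ, is ω-continuous but not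
continuous. -/
theorem ultrafilter_measure_omega_continuous_not_continuous
    {lam : Type*} (U : Ultrafilter lam)
    (hnp : ∀ a : lam, (U : Ultrafilter lam) ≠ pure a)
    (hcc : ∀ s : ℕ → Set lam, (∀ n, s n ∈ U) → (⋂ n, s n) ∈ U) :
    (∀ A : Set (lam → Bool), #A ≤ Cardinal.aleph0 →
      Continuous (A.restrict (fun x : lam → Bool =>
        if {i | x i = true} ∈ U then (1 : ℝ) else 0))) ∧
    ¬ Continuous (fun x : lam → Bool =>
        if {i | x i = true} ∈ U then (1 : ℝ) else 0) := by
  set f : (lam → Bool) → ℝ := fun x => if {i | x i = true} ∈ U then (1 : ℝ) else 0 with hf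
  have key : ∀ x y : lam → Bool, f x ≠ f y → {i | x i ≠ y i} ∈ U := by
    intro x y hxy
    by_cases hx : {i | x i = true} ∈ U <;> by_cases hy : {i | y i = true} ∈ U
    · simp [hf, hx, hy] at hxy
    · have hy' : {i | y i = true}ᶜ ∈ U := Ultrafilter.compl_mem_iff_notMem.2 hy
      refine Filter.mem_of_superset (Filter.inter_mem hx hy') ?_
      rintro i ⟨hi1, hi2⟩
      simp only [mem_compl_iff, mem_setOf_eq] at hi1 hi2 ⊢
      intro h; exact hi2 (h ▸ hi1)
    · have hx' : {i | x i = true}ᶜ ∈ U := Ultrafilter.compl_mem_iff_notMem.2 hx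
      refine Filter.mem_of_superset (Filter.inter_mem hx' hy) ?_
      rintro i ⟨hi1, hi2⟩
      simp only [mem_compl_iff, mem_setOf_eq] at hi1 hi2 ⊢
      intro h; exact hi1 (h ▸ hi2)
    · simp [hf, hx, hy] at hxy
  constructor
  · -- ω-continuity
    intro A hA
    rw [continuous_iff_continuousAt]
    intro x
    have hAc : A.Countable :=
      Set.countable_coe_iff.mp (Cardinal.mk_le_aleph0_iff.mp hA)
    set B : Set (lam → Bool) := {y ∈ A | f y ≠ f (x : lam → Bool)} with hB
    have hBc : B.Countable := hAc.mono (fun y hy => hy.1)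
    rcases B.eq_empty_or_nonempty with hBe | hBne
    · refine (continuousAt_const (y := f (x : lam → Bool))).congr (Filter.Eventually.of_forall ?_)
      intro z
      show f ↑x = A.restrict f z
      by_contra h
      have h' : f (z : lam → Bool) ≠ f (x : lam → Bool) := fun he => h he.symm
      have : (z : lam → Bool) ∈ B := ⟨z.2, h'⟩
      rw [hBe] at this
      exact this
    · obtain ⟨g, hg⟩ := hBc.exists_eq_range hBne
      have hmem : ∀ n, {i | (x : lam → Bool) i ≠ g n i} ∈ U := by
        intro n
        have hgn : g n ∈ B := hg ▸ Set.mem_range_self n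
        exact key _ _ (Ne.symm hgn.2)
      have hInt : (⋂ n, {i | (x : lam → Bool) i ≠ g n i}) ∈ U := hcc _ hmem
      obtain ⟨i₀, hi₀⟩ := Ultrafilter.nonempty_of_mem hInt
      have hi₀' : ∀ n, (x : lam → Bool) i₀ ≠ g n i₀ := by
        intro n
        exact Set.mem_iInter.1 hi₀ n
      refine (continuousAt_const (y := f (x : lam → Bool))).congr ?_
      have hV : {z : A | (z : lam → Bool) i₀ = (x : lam → Bool) i₀} ∈ nhds x := by
        refine IsOpen.mem_nhds ?_ rfl
        have : Continuous (fun z : A => (z : lam → Bool) i₀) :=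
          (continuous_apply i₀).comp continuous_subtype_val
        exact (isOpen_discrete {(x : lam → Bool) i₀}).preimage this
      refine Filter.eventually_of_mem hV ?_
      intro z hz
      show f ↑x = A.restrict f z
      by_contra h
      have h' : f (z : lam → Bool) ≠ f (x : lam → Bool) := fun he => h he.symm
      have hzB : (z : lam → Bool) ∈ B := ⟨z.2, h'⟩
      rw [hg] at hzB
      obtain ⟨n, hn⟩ := hzB
      exact hi₀' n (by rw [hn]; exact hz.symm)
  · -- not continuous
    intro h
    have hS : IsOpen (f ⁻¹' Set.Ioi (1/2 : ℝ)) := (isOpen_Ioi).preimage h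
    have hx₀ : (fun _ : lam => true) ∈ f ⁻¹' Set.Ioi (1/2 : ℝ) := by
      have hU : {i : lam | (fun _ : lam => true) i = true} ∈ U := by
        have h2 : {i : lam | (fun _ : lam => true) i = true} = Set.univ := by ext i; simp
        rw [h2]; exact Filter.univ_mem
      show (if {i : lam | (fun _ : lam => true) i = true} ∈ U then (1 : ℝ) else 0) ∈
        Set.Ioi (1/2 : ℝ)
      rw [if_pos hU]
      norm_num
    obtain ⟨I, u, hu, hsub⟩ := isOpen_pi_iff.1 hS _ hx₀
    set y : lam → Bool := fun i => decide (i ∈ I) with hy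
    have hyI : y ∈ (I : Set lam).pi u := by
      intro i hi
      have hi' : i ∈ I := hi
      have : y i = true := by simp [hy, hi']
      rw [this]
      exact (hu i hi).2
    have hyS : f y ∈ Set.Ioi (1/2 : ℝ) := hsub hyI
    have hyU : {i | y i = true} ∈ U := by
      by_contra hc
      simp only [hf, hc, if_false, Set.mem_Ioi] at hyS
      norm_num at hyS
    have hIU : (I : Set lam) ∈ U := by
      have : {i | y i = true} = (I : Set lam) := by
        ext i; simp [hy]
      rwa [this] at hyU
    obtain ⟨a, _, ha⟩ := Ultrafilter.eq_pure_of_finite_mem I.finite_toSet hIU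
    exact hnp a ha
end
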